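/- arXiv:1408.0812 — 3 statements merged into one kernel-verified Lean document; each statement's English description precedes it below -/
import Mathlib

section
/- Fix integers t > 0 and m > 2t+1, and define the graph B_{t,m} whose vertices are the injective (2t+1)-tuples of elements of [m], with an edge between (x_1,...,x_{2t+1}) and (y, x_1, ..., x_{2t}) whenever y ≠ x_{2t+1} (and the second tuple is injective). Then for t = 1 and m ≥ 5, χ(B_{1,m}) = Ω(log log m); in particular χ(B_{1,m}) ≥ 4 for all sufficiently large m. -/
/-- A vertex of Linial's neighborhood graph `B_{t,m}`: an injective `(2t+1)`-tuple of
elements of `[m]`. -/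
def LinialVertex (t m : ℕ) := { v : Fin (2 * t + 1) → Fin m // Function.Injective v }

/-- The "shift" relation underlying the edges of `B_{t,m}`: `w` is obtained from
`v = (x_1, ..., x_{2t+1})` as `(y, x_1, ..., x_{2t})` with `y ≠ x_{2t+1}`. -/
def LinialShift {t m : ℕ} (v w : LinialVertex t m) : Prop :=
  (∀ i : Fin (2 * t), w.1 i.succ = v.1 i.castSucc) ∧ w.1 0 ≠ v.1 (Fin.last (2 * t))

/-- Linial's neighborhood graph `B_{t,m}`, capturing the possible `t`-radius views in a
ring with ids from `[m]`:  vertices are injective `(2t+1)`-tuples over `[m]`, with an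
edge between `(x_1, ..., x_{2t+1})` and `(y, x_1, ..., x_{2t})` whenever `y ≠ x_{2t+1}`. -/
def LinialGraph (t m : ℕ) : SimpleGraph (LinialVertex t m) where
  Adj v w := LinialShift v w ∨ LinialShift w v
  symm := ⟨fun v w h => h.symm⟩
  loopless := ⟨by
    rintro ⟨v, hv⟩ (⟨hsh, hne⟩ | ⟨hsh, hne⟩) <;>
    · rcases Nat.eq_zero_or_pos t with ht | ht
      · subst ht
        exact hne (congrArg v (by decide))
      · have h0 := hsh ⟨0, by omega⟩
        have := hv h0
        simp [Fin.ext_iff] at this⟩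

/-- Key combinatorial fact (the double-shift-graph argument): a proper coloring of
`B_{1,m}` with `n` colors forces `m ≤ 2 ^ 2 ^ n`. -/
lemma linial_key (m n : ℕ) (C : (LinialGraph 1 m).Coloring (Fin n)) : m ≤ 2 ^ 2 ^ n := by
  classical
  have mkinj : ∀ a b c : Fin m, c < b → b < a →
      Function.Injective (show Fin (2*1+1) → Fin m from ![a, b, c]) := by
    intro a b c h1 h2 i j hij
    fin_cases i <;> fin_cases j <;> simp_all <;> omega
  set V : ∀ a b c : Fin m, c < b → b < a → LinialVertex 1 m :=
    fun a b c h1 h2 => ⟨![a, b, c], mkinj a b c h1 h2⟩ with hV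
  have adj : ∀ (a b c d : Fin m) (h1 : c < b) (h2 : b < a) (h3 : a < d),
      (LinialGraph 1 m).Adj (V a b c h1 h2) (V d a b h2 h3) := by
    intro a b c d h1 h2 h3
    left
    constructor
    · intro i
      fin_cases i <;> rfl
    · show d ≠ c
      intro h; rw [h] at h3; omega
  -- F: derived coloring of the (single) shift graph on decreasing pairs
  set F : ∀ b c : Fin m, c < b → Finset (Fin n) :=
    fun b c h => Finset.univ.filter
      (fun t => ∃ a, ∃ h2 : b < a, C (V a b c h h2) = t) with hF
  have claim1 : ∀ (a b c : Fin m) (h1 : c < b) (h2 : b < a), F b c h1 ≠ F a b h2 := by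
    intro a b c h1 h2 heq
    have hmem : C (V a b c h1 h2) ∈ F b c h1 := by
      simp only [hF, Finset.mem_filter, Finset.mem_univ, true_and]
      exact ⟨a, h2, rfl⟩
    rw [heq] at hmem
    simp only [hF, Finset.mem_filter, Finset.mem_univ, true_and] at hmem
    obtain ⟨d, h3, hd⟩ := hmem
    exact C.valid (adj a b c d h1 h2 h3) hd.symm
  -- H: derived "coloring" of single ids
  set H : Fin m → Finset (Finset (Fin n)) :=
    fun c => Finset.univ.filter (fun s => ∃ b, ∃ h : c < b, F b c h = s) with hH
  have claim2 : ∀ (b c : Fin m) (h : c < b), H c ≠ H b := by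
    intro b c h heq
    have hmem : F b c h ∈ H c := by
      simp only [hH, Finset.mem_filter, Finset.mem_univ, true_and]
      exact ⟨b, h, rfl⟩
    rw [heq] at hmem
    simp only [hH, Finset.mem_filter, Finset.mem_univ, true_and] at hmem
    obtain ⟨a, h2, ha⟩ := hmem
    exact claim1 a b c h h2 ha.symm
  have hinj : Function.Injective H := by
    intro x y hxy
    by_contra hne
    rcases lt_or_gt_of_ne hne with h | h
    · exact claim2 y x h hxy
    · exact claim2 x y h hxy.symm
  calc m = Fintype.card (Fin m) := (Fintype.card_fin m).symm
    _ ≤ Fintype.card (Finset (Finset (Fin n))) := Fintype.card_le_of_injective H hinj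
    _ = 2 ^ 2 ^ n := by simp [Fintype.card_finset]

lemma linial_key' (m n : ℕ) (h : (LinialGraph 1 m).Colorable n) : m ≤ 2 ^ 2 ^ n := by
  obtain ⟨C⟩ := h
  exact linial_key m n C

instance (t m : ℕ) : Finite (LinialVertex t m) := by
  unfold LinialVertex; infer_instance

set_option maxRecDepth 10000

/-- **Linial's chromatic lower bound for `B_{1,m}` (from Theorem 2.1 of Linial 1992).**
The chromatic number of `B_{1,m}` is `Ω(log log m)`; in particular it is at least `4`
(i.e. strictly greater than `3`, so no proper 3-coloring exists) for all sufficiently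
large `m`. -/
theorem linialGraph_chromaticNumber_lower_bound :
    ∃ c : ℝ, 0 < c ∧ ∃ M : ℕ, ∀ m : ℕ, M ≤ m →
      c * Real.log (Real.log m) ≤ (((LinialGraph 1 m).chromaticNumber.toNat : ℝ)) ∧
      3 < (LinialGraph 1 m).chromaticNumber := by
  refine ⟨1, one_pos, 2 ^ 256 + 1, fun m hm => ?_⟩
  set G := LinialGraph 1 m with hG
  set k := G.chromaticNumber.toNat with hk
  have hcol : G.Colorable k := G.colorable_chromaticNumber_of_fintype
  have hmk : m ≤ 2 ^ 2 ^ k := linial_key' m k hcol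
  constructor
  · -- analytic part
    rw [one_mul]
    have hm1 : (1 : ℝ) < (m : ℝ) := by
      have : (1 : ℕ) < m := by omega
      exact_mod_cast this
    have hlogm_pos : 0 < Real.log m := Real.log_pos hm1
    have h1 : Real.log m ≤ (2 : ℝ) ^ (2 ^ k) * Real.log 2 := by
      have hle : (m : ℝ) ≤ (2 : ℝ) ^ (2 ^ k) := by exact_mod_cast hmk
      calc Real.log m ≤ Real.log ((2 : ℝ) ^ (2 ^ k)) :=
            Real.log_le_log (by positivity) hle
        _ = (2 ^ k : ℕ) * Real.log 2 := by rw [Real.log_pow]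
        _ ≤ (2 : ℝ) ^ (2 ^ k) * Real.log 2 := by
            have h2 : (0:ℝ) ≤ Real.log 2 := Real.log_nonneg (by norm_num)
            have : ((2 ^ k : ℕ) : ℝ) = (2:ℝ) ^ k := by push_cast; ring
            rw [this]
            gcongr
            · norm_num
            · exact Nat.le_of_lt (Nat.lt_two_pow_self (n := k))
    have h1' : Real.log m ≤ (2 : ℝ) ^ k * Real.log 2 := by
      have hle : (m : ℝ) ≤ (2 : ℝ) ^ (2 ^ k) := by exact_mod_cast hmk
      calc Real.log m ≤ Real.log ((2 : ℝ) ^ (2 ^ k)) :=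
            Real.log_le_log (by positivity) hle
        _ = (2 ^ k : ℕ) * Real.log 2 := by rw [Real.log_pow]
        _ = (2 : ℝ) ^ k * Real.log 2 := by push_cast; ring
    have hlog2_pos : (0:ℝ) < Real.log 2 := Real.log_pos (by norm_num)
    have h2 : Real.log (Real.log m) ≤ Real.log ((2 : ℝ) ^ k * Real.log 2) :=
      Real.log_le_log hlogm_pos h1'
    have h3 : Real.log ((2 : ℝ) ^ k * Real.log 2)
        = k * Real.log 2 + Real.log (Real.log 2) := by
      rw [Real.log_mul (by positivity) (ne_of_gt hlog2_pos), Real.log_pow]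
    have hlog2_le_one : Real.log 2 ≤ 1 := by
      have := Real.log_le_sub_one_of_pos (show (0:ℝ) < 2 by norm_num)
      linarith
    have h4 : Real.log (Real.log 2) ≤ 0 := Real.log_nonpos (le_of_lt hlog2_pos) hlog2_le_one
    have h5 : (k : ℝ) * Real.log 2 ≤ k := by
      have : (0:ℝ) ≤ (k:ℝ) := Nat.cast_nonneg k
      nlinarith
    calc Real.log (Real.log m) ≤ (k:ℝ) * Real.log 2 + Real.log (Real.log 2) := by
          rw [← h3]; exact h2
      _ ≤ (k:ℝ) := by linarith
  · -- 3 < chromatic number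
    by_contra hle
    push_neg at hle
    have h3 : G.chromaticNumber ≤ (3 : ℕ) := by exact_mod_cast hle
    have hc3 : G.Colorable 3 := SimpleGraph.chromaticNumber_le_iff_colorable.mp h3
    have := linial_key' m 3 hc3
    have : m ≤ 2 ^ 256 := by norm_num at this; omega
    omega
end

section
/- In any maximal independent set S of a path graph P on 5 vertices, even if one endpoint of the path is additionally adjacent to an external vertex that is in the independent set, at least 2 vertices of P belong to S. Formally: let G be a graph containing an induced path v_1—v_2—v_3—v_4—v_5 where v_2, v_3, v_4, v_5 have no neighbors outside the path and v_1 has at most one additional neighbor a outside the path; then any maximal independent set of G contains at least 2 of the vertices v_1,...,v_5. -/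
/-! A maximal independent set meets the closed neighbourhood of every vertex. The closed
neighbourhoods of `v 1` and `v 4` lie in the disjoint sets `{v 0, v 1, v 2}` and `{v 3, v 4}`. -/

namespace SimpleGraph

variable {V : Type*} (G : SimpleGraph V)

theorem exists_mem_eq_or_adj_of_dominating {S : Set V} (hdom : ∀ x ∉ S, ∃ y ∈ S, G.Adj x y)
    (x : V) : ∃ y ∈ S, y = x ∨ G.Adj x y := by
  by_cases hx : x ∈ S
  · exact ⟨x, hx, Or.inl rfl⟩
  · obtain ⟨y, hy, hxy⟩ := hdom x hx
    exact ⟨y, hy, Or.inr hxy⟩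

theorem exists_mem_index_near_of_dominating {n : ℕ} {v : Fin n → V}
    (hinduced : ∀ i j : Fin n, i.val + 1 < j.val → ¬ G.Adj (v i) (v j)) {i : Fin n}
    (hclosed : ∀ w, G.Adj (v i) w → w ∈ Set.range v) {S : Set V}
    (hdom : ∀ x ∉ S, ∃ y ∈ S, G.Adj x y) :
    ∃ j : Fin n, v j ∈ S ∧ i.val ≤ j.val + 1 ∧ j.val ≤ i.val + 1 := by
  obtain ⟨y, hyS, rfl | hadj⟩ := G.exists_mem_eq_or_adj_of_dominating hdom (v i)
  · exact ⟨i, hyS, by omega, by omega⟩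
  · obtain ⟨j, rfl⟩ := hclosed y hadj
    refine ⟨j, hyS, ?_, ?_⟩
    · by_contra! h
      exact hinduced j i (by omega) hadj.symm
    · by_contra! h
      exact hinduced i j (by omega) hadj

end SimpleGraph

open Classical in
theorem path_gadget_two_mis_members_general {V : Type*} (G : SimpleGraph V)
    (v : Fin 5 → V)
    (hinduced : ∀ i j : Fin 5, i.val + 1 < j.val → ¬ G.Adj (v i) (v j))
    (hclosed : ∀ i : Fin 5, i ≠ 0 → ∀ w, G.Adj (v i) w → w ∈ Set.range v)
    (S : Set V)
    (hmaximal : ∀ x ∉ S, ∃ y ∈ S, G.Adj x y) :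
    2 ≤ (Finset.univ.filter fun i : Fin 5 => v i ∈ S).card := by
  obtain ⟨j, hjS, -, hj⟩ :=
    G.exists_mem_index_near_of_dominating hinduced (hclosed 1 (by decide)) hmaximal
  obtain ⟨k, hkS, hk, -⟩ :=
    G.exists_mem_index_near_of_dominating hinduced (hclosed 4 (by decide)) hmaximal
  have hjk : j ≠ k := Fin.ne_of_val_ne (by simp only [Fin.isValue, Fin.val_one] at hj hk; omega)
  exact Finset.one_lt_card.2 ⟨j, by simpa using hjS, k, by simpa using hkS, hjk⟩

open Classical in
/-- **A pendant path of 5 vertices contributes at least 2 MIS members.**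
Let `G` contain an induced path `v 0 — v 1 — v 2 — v 3 — v 4` such that
`v 1, v 2, v 3, v 4` have no neighbors outside the path, and the endpoint `v 0` has at
most one additional neighbor `a` outside the path (which may well be in the independent
set).  Then any maximal independent set `S` of `G` contains at least 2 of the vertices
`v 0, ..., v 4`. -/
theorem path_gadget_two_mis_members {V : Type*} (G : SimpleGraph V)
    (v : Fin 5 → V) (hinj : Function.Injective v) (a : V) (ha : a ∉ Set.range v)
    (hpath : ∀ i : Fin 4, G.Adj (v i.castSucc) (v i.succ))
    (hinduced : ∀ i j : Fin 5, i.val + 1 < j.val → ¬ G.Adj (v i) (v j))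
    (hclosed : ∀ i : Fin 5, i ≠ 0 → ∀ w, G.Adj (v i) w → w ∈ Set.range v)
    (hend : ∀ w, G.Adj (v 0) w → w ∈ Set.range v ∨ w = a)
    (S : Set V)
    (hindep : ∀ x ∈ S, ∀ y ∈ S, ¬ G.Adj x y)
    (hmaximal : ∀ x ∉ S, ∃ y ∈ S, G.Adj x y) :
    2 ≤ (Finset.univ.filter fun i : Fin 5 => v i ∈ S).card :=
  path_gadget_two_mis_members_general G v hinduced hclosed S hmaximal
end

section
/- Any independent set in a graph contains at most one vertex from any clique. Consequently, in the graph G_κ used in the MIS lower bound reduction, if the set-i gadget is a clique on 5 vertices (with one vertex additionally attached to anchor i), any maximal independent set contains at most 1 vertex from set i; and if the set-i gadget is a path on 5 vertices, any maximal independent set contains at least 2 vertices of set i. Therefore the number of MIS vertices in set i (≤1 versus ≥2) determines the bit κ[i]. -/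
/-!
On a pendant path `w 0 — w 1 — w 2 — w 3 — w 4` maximality forces a member of
the set next to `w 1` and one next to `w 4`; all neighbours of these two vertices lie on the path,
so the set meets both `{w 0, w 1, w 2}` and `{w 3, w 4}`.
-/

namespace SimpleGraph

variable {V : Type*} {G : SimpleGraph V} {S : Set V}

theorem IsIndepSet.subsingleton_inter_of_isClique (hS : G.IsIndepSet S) {K : Set V}
    (hK : G.IsClique K) : (S ∩ K).Subsingleton := by
  intro x hx y hy
  by_contra hne
  exact hS hx.1 hy.1 hne (hK hx.2 hy.2 hne)

theorem IsIndepSet.card_filter_mem_le_one_of_pairwise_adj {ι : Type*} [Fintype ι]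
    [DecidablePred (· ∈ S)] (hS : G.IsIndepSet S) {w : ι → V}
    (hadj : ∀ i j, i ≠ j → G.Adj (w i) (w j)) :
    (Finset.univ.filter fun i => w i ∈ S).card ≤ 1 := by
  refine Finset.card_le_one.mpr fun i hi j hj => ?_
  rw [Finset.mem_filter] at hi hj
  by_contra hne
  exact hS hi.2 hj.2 (hadj i j hne).ne (hadj i j hne)

theorem val_consecutive_of_adj_of_chordless {n : ℕ} {w : Fin n → V}
    (hchordless : ∀ i j : Fin n, i.val + 1 < j.val → ¬ G.Adj (w i) (w j)) {i j : Fin n}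
    (h : G.Adj (w i) (w j)) : i.val ≤ j.val + 1 ∧ j.val ≤ i.val + 1 := by
  have hne : i.val ≠ j.val := fun hv => h.ne (congrArg w (Fin.ext hv))
  have hij : ¬ i.val + 1 < j.val := fun hlt => hchordless i j hlt h
  have hji : ¬ j.val + 1 < i.val := fun hlt => hchordless j i hlt h.symm
  omega

theorem exists_near_mem_of_neighbors_on_path {n : ℕ} {w : Fin n → V}
    (hmaximal : ∀ x ∉ S, ∃ y ∈ S, G.Adj x y)
    (hchordless : ∀ i j : Fin n, i.val + 1 < j.val → ¬ G.Adj (w i) (w j)) {i : Fin n}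
    (hclosed : ∀ u, G.Adj (w i) u → u ∈ Set.range w) :
    ∃ j, i.val ≤ j.val + 1 ∧ j.val ≤ i.val + 1 ∧ w j ∈ S := by
  by_cases hi : w i ∈ S
  · exact ⟨i, by omega, by omega, hi⟩
  obtain ⟨y, hyS, hadj⟩ := hmaximal (w i) hi
  obtain ⟨j, rfl⟩ := hclosed y hadj
  exact ⟨j, val_consecutive_of_adj_of_chordless hchordless hadj |>.imp_right (⟨·, hyS⟩)⟩

end SimpleGraph

open SimpleGraph

open Classical in
/-- **MIS counts in the gadgets of `G_κ` determine the bits of `κ`.**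
Let `S` be a maximal independent set of a graph `G`.  Then:
(1) `S` contains at most one vertex of any clique `K`;
(2) if a 5-vertex gadget `w 0, ..., w 4` forms a clique (the case `κ[i] = 1`, with one
member additionally attached to anchor `i`), then `S` contains at most 1 of its
vertices; and
(3) if the gadget forms a pendant path attached through its endpoint `w 0` to an anchor
`anchor` (the case `κ[i] = 0`), then `S` contains at least 2 of its vertices.
Hence the number of MIS vertices in gadget `i` (`≤ 1` versus `≥ 2`) determines `κ[i]`. -/
theorem mis_gadget_counts_determine_bits {V : Type*} (G : SimpleGraph V) (S : Set V)
    (hindep : ∀ x ∈ S, ∀ y ∈ S, ¬ G.Adj x y)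
    (hmaximal : ∀ x ∉ S, ∃ y ∈ S, G.Adj x y) :
    (∀ K : Set V, G.IsClique K → (S ∩ K).Subsingleton) ∧
    (∀ w : Fin 5 → V, Function.Injective w →
      (∀ i j : Fin 5, i ≠ j → G.Adj (w i) (w j)) →
      (Finset.univ.filter fun i : Fin 5 => w i ∈ S).card ≤ 1) ∧
    (∀ (w : Fin 5 → V) (anchor : V), Function.Injective w → anchor ∉ Set.range w →
      (∀ i : Fin 4, G.Adj (w i.castSucc) (w i.succ)) →
      (∀ i j : Fin 5, i.val + 1 < j.val → ¬ G.Adj (w i) (w j)) →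
      (∀ i : Fin 5, i ≠ 0 → ∀ u, G.Adj (w i) u → u ∈ Set.range w) →
      (∀ u, G.Adj (w 0) u → u ∈ Set.range w ∨ u = anchor) →
      2 ≤ (Finset.univ.filter fun i : Fin 5 => w i ∈ S).card) := by
  have hS : G.IsIndepSet S := fun x hx y hy _ => hindep x hx y hy
  refine ⟨fun K hK => hS.subsingleton_inter_of_isClique hK,
    fun w _ hadj => hS.card_filter_mem_le_one_of_pairwise_adj hadj, ?_⟩
  intro w _ _ _ _ hchordless hclosed _
  obtain ⟨i, -, hi, hiS⟩ :=
    exists_near_mem_of_neighbors_on_path hmaximal hchordless (hclosed 1 (by decide))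
  obtain ⟨j, hj, -, hjS⟩ :=
    exists_near_mem_of_neighbors_on_path hmaximal hchordless (hclosed 4 (by decide))
  refine Finset.one_lt_card.mpr ⟨i, ?_, j, ?_, fun hij => ?_⟩
  · simpa using hiS
  · simpa using hjS
  · subst hij
    simp only [Fin.coe_ofNat_eq_mod] at hi hj
    omega
end
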